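/- Let D ⊂ ℝⁿ be a domain with n ≥ 2, let x₀ ∈ D, and let Q : D → [0,∞] be a measurable function that is integrable on some ball B(x₀, r₀) ⊂ D and has finite mean oscillation at x₀. Then there exist ε₀ ∈ (0, e⁻¹) with B(x₀, ε₀) ⊂ D, a constant C > 0, and ε' ∈ (0, ε₀) such that ∫_{{x : ε < |x−x₀| < ε₀}} Q(x)·( |x−x₀|·log(1/|x−x₀|) )^{−n} dm(x) ≤ C·log log(1/ε) for every ε ∈ (0, ε'); in particular, since n ≥ 2, this integral is o( (log log(1/ε))ⁿ ) as ε → 0⁺. -/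

import Mathlib

/-!
Cut the annulus into the dyadic shells `r 2^{-k-1} < |x - x₀| ≤ r 2^{-k}`. Finite mean oscillation
makes the means of `Q` over consecutive dyadic balls differ by at most `2ⁿ δ`, so the mean over
`B(x₀, r 2^{-k})` grows at most linearly in `k`. On the `k`-th shell the weight
`(|x - x₀| log (1/|x - x₀|))⁻ⁿ` is at most `(r 2^{-k-1} (k+1) log 2)⁻ⁿ`, so, as `n ≥ 2`, the shell
contributes `O(1/(k+1))`. The annulus `ε < |x - x₀| < r` meets `O(log (1/ε))` shells, and the
harmonic sum gives `O(log log (1/ε))`.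
-/

open MeasureTheory Set Filter Metric

/-- The volume `Ωₙ` of the unit ball in `ℝⁿ`. -/
noncomputable def unitBallVol (n : ℕ) : ℝ :=
  (volume (Metric.ball (0 : EuclideanSpace ℝ (Fin n)) 1)).toReal

/-- The mean of `Q` over the ball `B(x₀, ε)`. -/
noncomputable def ballMean (n : ℕ) (Q : EuclideanSpace ℝ (Fin n) → ℝ)
    (x₀ : EuclideanSpace ℝ (Fin n)) (ε : ℝ) : ℝ :=
  (unitBallVol n * ε ^ n)⁻¹ * ∫ x in Metric.ball x₀ ε, Q x

open Real Topology

lemma exists_nonneg_eventually_le_of_limsup_ofReal_lt_top {α : Type*} {l : Filter α}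
    {f : α → ℝ} (h : limsup (fun a => ENNReal.ofReal (f a)) l < ⊤) :
    ∃ δ, 0 ≤ δ ∧ ∀ᶠ a in l, f a ≤ δ := by
  obtain ⟨L, hL, hLtop⟩ := exists_between h
  exact ⟨L.toReal, ENNReal.toReal_nonneg, (eventually_lt_of_limsup_lt hL).mono fun a ha =>
    (ENNReal.ofReal_le_iff_le_toReal hLtop.ne).1 ha.le⟩

lemma tendsto_div_pow_nhds_zero_of_le_mul {α : Type*} {l : Filter α} {F G : α → ℝ} {C : ℝ}
    {n : ℕ} (hn : 2 ≤ n) (hG : Tendsto G l atTop) (hF0 : ∀ᶠ a in l, 0 ≤ F a)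
    (hFG : ∀ᶠ a in l, F a ≤ C * G a) : Tendsto (fun a => F a / G a ^ n) l (𝓝 0) := by
  have hG1 := hG.eventually_ge_atTop 1
  refine squeeze_zero' ?_ ?_ (hG.const_div_atTop C)
  · filter_upwards [hF0, hG1] with a hFa hGa
    have : 0 ≤ G a := by linarith
    positivity
  · filter_upwards [hF0, hFG, hG1] with a hFa hFGa hGa
    have hC : 0 ≤ C := nonneg_of_mul_nonneg_left (hFa.trans hFGa) (by linarith)
    have hpow : G a ^ 2 ≤ G a ^ n := pow_le_pow_right₀ hGa hn
    rw [div_le_div_iff₀ (by positivity) (by linarith)]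
    calc F a * G a ≤ C * G a * G a := by gcongr
      _ = C * G a ^ 2 := by ring
      _ ≤ C * G a ^ n := by gcongr

lemma sum_range_div_succ_le_mul_one_add_log {c : ℝ} (hc : 0 ≤ c) (m : ℕ) :
    ∑ k ∈ Finset.range m, c / (k + 1) ≤ c * (1 + log m) := by
  have h : ((harmonic m : ℚ) : ℝ) ≤ 1 + log m := harmonic_le_one_add_log m
  have hsum : ((harmonic m : ℚ) : ℝ) = ∑ k ∈ Finset.range m, ((k : ℝ) + 1)⁻¹ := by
    simp [harmonic]
  rw [hsum] at h
  simpa [Finset.mul_sum, div_eq_mul_inv] using mul_le_mul_of_nonneg_left h hc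

lemma one_add_log_succ_le_mul_log_log {K : ℕ} {ε : ℝ} (hε : 0 < ε)
    (hεe : ε ≤ exp (-exp 1)) (hK : (2 : ℝ) ^ K ≤ 1 / ε) :
    1 + log (K + 1) ≤ (2 + log 3) * log (log (1 / ε)) := by
  set L := log (1 / ε)
  have hLe : exp 1 ≤ L := by
    rw [le_log_iff_exp_le (by positivity), one_div, le_inv_comm₀ (exp_pos _) hε, ← exp_neg]
    exact hεe
  have hL1 : 1 ≤ log L := by rw [le_log_iff_exp_le (by linarith [exp_pos 1])]; exact hLe
  have hKL : K * log 2 ≤ L := by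
    rw [← log_pow]; exact log_le_log (by positivity) hK
  have hK3 : (K : ℝ) + 1 ≤ 3 * L := by
    nlinarith [log_two_gt_d9, exp_one_gt_d9]
  have hlog : log (K + 1) ≤ log 3 + log L := by
    rw [← log_mul (by norm_num) (by linarith [exp_pos 1])]
    exact log_le_log (by positivity) hK3
  nlinarith [log_nonneg (by norm_num : (1 : ℝ) ≤ 3)]

lemma div_mul_pow_le_div {b M l x : ℝ} {n : ℕ} (hn : 2 ≤ n) (hM : 0 ≤ M) (hl : 0 < l)
    (hx : 1 ≤ x) (hb : b ≤ M * x) : b / (x * l) ^ n ≤ M / l ^ n / x := by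
  have hx0 : 0 < x := by linarith
  rw [div_div, div_le_div_iff₀ (by positivity) (by positivity), mul_pow]
  calc b * (l ^ n * x) ≤ M * x * (l ^ n * x) := by gcongr
    _ = M * x ^ 2 * l ^ n := by ring
    _ ≤ M * x ^ n * l ^ n := by gcongr
    _ = M * (x ^ n * l ^ n) := by ring

lemma setLIntegral_ofReal_div_pow_le {α : Type*} [MeasurableSpace α] {μ : Measure α}
    {f g : α → ℝ} {s t : Set α} {a : ℝ} (n : ℕ) (ha : 0 < a) (hs : MeasurableSet s)
    (hst : s ≤ᵐ[μ] t) (hf : IntegrableOn f t μ) (hf0 : ∀ x, 0 ≤ f x) (hg : ∀ x ∈ s, a ≤ g x) :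
    ∫⁻ x in s, ENNReal.ofReal (f x / g x ^ n) ∂μ ≤
      ENNReal.ofReal ((∫ x in t, f x ∂μ) / a ^ n) := by
  calc ∫⁻ x in s, ENNReal.ofReal (f x / g x ^ n) ∂μ
      ≤ ∫⁻ x in s, ENNReal.ofReal (f x / a ^ n) ∂μ :=
        setLIntegral_mono' hs fun x hx => ENNReal.ofReal_le_ofReal <|
          div_le_div_of_nonneg_left (hf0 x) (pow_pos ha n) (pow_le_pow_left₀ ha.le (hg x hx) n)
    _ ≤ ∫⁻ x in t, ENNReal.ofReal (f x / a ^ n) ∂μ := lintegral_mono_set' hst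
    _ = ENNReal.ofReal ((∫ x in t, f x ∂μ) / a ^ n) := by
        rw [← integral_div, ofReal_integral_eq_lintegral_ofReal (hf.div_const _)
          (ae_of_all _ fun x => div_nonneg (hf0 x) (pow_pos ha n).le)]

lemma tendsto_log_log_one_div_nhdsGT_zero :
    Tendsto (fun ε : ℝ => log (log (1 / ε))) (𝓝[>] 0) atTop := by
  have hinv : Tendsto (fun ε : ℝ => 1 / ε) (𝓝[>] 0) atTop := by
    simpa only [one_div] using tendsto_inv_nhdsGT_zero (𝕜 := ℝ)
  exact tendsto_log_atTop.comp (tendsto_log_atTop.comp hinv)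

section DyadicShell

variable {X : Type*} [PseudoMetricSpace X] {x₀ : X} {r : ℝ}

def dyadicShell (x₀ : X) (r : ℝ) (k : ℕ) : Set X :=
  {x | r / 2 ^ (k + 1) < dist x x₀ ∧ dist x x₀ ≤ r / 2 ^ k}

lemma measurableSet_dyadicShell [MeasurableSpace X] [OpensMeasurableSpace X] (k : ℕ) :
    MeasurableSet (dyadicShell x₀ r k) :=
  (isOpen_lt continuous_const (continuous_id.dist continuous_const)).measurableSet.inter
    (isClosed_le (continuous_id.dist continuous_const) continuous_const).measurableSet

lemma annulus_subset_iUnion_dyadicShell {ε : ℝ} {K : ℕ} (hε : 0 < ε) (hK : r / ε < 2 ^ (K + 1)) :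
    {x | ε < dist x x₀ ∧ dist x x₀ < r} ⊆ ⋃ k : Fin (K + 1), dyadicShell x₀ r k := by
  rintro x ⟨hεx, hxr⟩
  have hx : 0 < dist x x₀ := hε.trans hεx
  obtain ⟨k, hk, hk'⟩ := exists_nat_pow_near ((one_le_div hx).2 hxr.le) one_lt_two
  have hkK : k < K + 1 := by
    refine (pow_lt_pow_iff_right₀ one_lt_two).1 (hk.trans_lt ?_)
    exact (div_lt_div_of_pos_left (hx.trans hxr) hε hεx).trans hK
  refine mem_iUnion.2 ⟨⟨k, hkK⟩, ?_, ?_⟩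
  · rw [div_lt_iff₀ (by positivity)]
    rwa [div_lt_iff₀ hx, mul_comm] at hk'
  · rw [le_div_iff₀ (by positivity)]
    rwa [le_div_iff₀ hx, mul_comm] at hk

lemma le_dist_mul_log_inv_of_mem_dyadicShell {x : X} {k : ℕ} (hr : 0 < r) (hr2 : r ≤ 1 / 2)
    (hx : x ∈ dyadicShell x₀ r k) :
    r / 2 ^ (k + 1) * ((k + 1) * log 2) ≤ dist x x₀ * log (1 / dist x x₀) := by
  obtain ⟨h1, h2⟩ := hx
  have hd : 0 < dist x x₀ := lt_of_le_of_lt (by positivity) h1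
  have hpow : (2 : ℝ) ^ (k + 1) ≤ 1 / dist x x₀ := by
    rw [le_div_iff₀ hd]
    calc 2 ^ (k + 1) * dist x x₀ ≤ 2 ^ (k + 1) * (r / 2 ^ k) := by gcongr
      _ = 2 * r := by field_simp; ring
      _ ≤ 1 := by linarith
  have hlog : ((k : ℝ) + 1) * log 2 ≤ log (1 / dist x x₀) := by
    calc ((k : ℝ) + 1) * log 2 = log (2 ^ (k + 1)) := by rw [log_pow]; push_cast; ring
      _ ≤ log (1 / dist x x₀) := log_le_log (by positivity) hpow
  exact mul_le_mul h1.le hlog (by positivity) hd.le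

lemma div_mul_log_inv_pow_nonneg {n : ℕ} {Q : X → ℝ} (hQ0 : ∀ x, 0 ≤ Q x) {x : X}
    (hx : dist x x₀ ≤ 1) : 0 ≤ Q x / (dist x x₀ * log (1 / dist x x₀)) ^ n := by
  have : 0 ≤ log (1 / dist x x₀) := by
    rw [one_div, log_inv, neg_nonneg]
    exact log_nonpos dist_nonneg hx
  have := hQ0 x
  positivity

lemma measurableSet_annulus [MeasurableSpace X] [OpensMeasurableSpace X] {ε : ℝ} :
    MeasurableSet {x : X | ε < dist x x₀ ∧ dist x x₀ < r} :=
  ((isOpen_lt continuous_const (continuous_id.dist continuous_const)).inter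
    (isOpen_lt (continuous_id.dist continuous_const) continuous_const)).measurableSet

end DyadicShell

section BallMean

variable {n : ℕ} {Q : EuclideanSpace ℝ (Fin n) → ℝ} {x₀ : EuclideanSpace ℝ (Fin n)} {r s : ℝ}

noncomputable def meanOscillation (n : ℕ) (Q : EuclideanSpace ℝ (Fin n) → ℝ)
    (x₀ : EuclideanSpace ℝ (Fin n)) (ε : ℝ) : ℝ :=
  ballMean n (fun x => |Q x - ballMean n Q x₀ ε|) x₀ ε

lemma unitBallVol_pos (n : ℕ) : 0 < unitBallVol n :=
  ENNReal.toReal_pos (measure_ball_pos _ _ one_pos).ne' measure_ball_lt_top.ne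

lemma measureReal_ball_eq (x₀ : EuclideanSpace ℝ (Fin n)) (hr : 0 < r) :
    volume.real (ball x₀ r) = unitBallVol n * r ^ n := by
  rw [measureReal_def, Measure.addHaar_ball_of_pos _ _ hr, ENNReal.toReal_mul,
    finrank_euclideanSpace, Fintype.card_fin, ENNReal.toReal_ofReal (by positivity), unitBallVol,
    mul_comm]

lemma integral_ball_eq_mul_ballMean (hr : 0 < r) :
    ∫ x in ball x₀ r, Q x = unitBallVol n * r ^ n * ballMean n Q x₀ r := by
  have := unitBallVol_pos n
  rw [ballMean, mul_inv_cancel_left₀ (by positivity)]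

lemma ballMean_nonneg (hQ : ∀ x, 0 ≤ Q x) (hr : 0 ≤ r) : 0 ≤ ballMean n Q x₀ r := by
  have := unitBallVol_pos n
  exact mul_nonneg (by positivity) (setIntegral_nonneg measurableSet_ball fun x _ => hQ x)

lemma ballMean_sub_const (hr : 0 < r) (hQ : IntegrableOn Q (ball x₀ r)) (c : ℝ) :
    ballMean n (fun x => Q x - c) x₀ r = ballMean n Q x₀ r - c := by
  have := unitBallVol_pos n
  rw [ballMean, integral_sub hQ (integrableOn_const measure_ball_lt_top.ne), setIntegral_const,
    measureReal_ball_eq x₀ hr, smul_eq_mul, mul_sub, ballMean, inv_mul_cancel_left₀ (by positivity)]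

lemma abs_ballMean_le (hr : 0 ≤ r) : |ballMean n Q x₀ r| ≤ ballMean n (fun x => |Q x|) x₀ r := by
  have := unitBallVol_pos n
  rw [ballMean, ballMean, abs_mul, abs_of_nonneg (by positivity)]
  gcongr
  simpa only [Real.norm_eq_abs] using norm_integral_le_integral_norm (μ := volume.restrict _) Q

lemma ballMean_le_div_pow_mul_ballMean (hr : 0 < r) (hrs : r ≤ s) (hQ : IntegrableOn Q (ball x₀ s))
    (hQ0 : ∀ x, 0 ≤ Q x) : ballMean n Q x₀ r ≤ (s / r) ^ n * ballMean n Q x₀ s := by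
  have := unitBallVol_pos n
  have hs : 0 < s := hr.trans_le hrs
  have hscale : (s / r) ^ n * (unitBallVol n * s ^ n)⁻¹ = (unitBallVol n * r ^ n)⁻¹ := by
    rw [div_pow]
    field_simp
  rw [ballMean, ballMean, ← mul_assoc, hscale]
  exact mul_le_mul_of_nonneg_left
    (setIntegral_mono_set hQ (ae_of_all _ hQ0) (ball_subset_ball hrs).eventuallyLE) (by positivity)

lemma abs_ballMean_sub_ballMean_le (hr : 0 < r) (hrs : r ≤ s) (hQ : IntegrableOn Q (ball x₀ s)) :
    |ballMean n Q x₀ r - ballMean n Q x₀ s| ≤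
      (s / r) ^ n * meanOscillation n Q x₀ s := by
  rw [← ballMean_sub_const hr (hQ.mono_set (ball_subset_ball hrs))]
  exact (abs_ballMean_le hr.le).trans <| ballMean_le_div_pow_mul_ballMean hr hrs
    (hQ.sub (integrableOn_const measure_ball_lt_top.ne)).abs fun x => abs_nonneg _

lemma ballMean_div_two_pow_le {δ : ℝ} (hr : 0 < r) (hQ : IntegrableOn Q (ball x₀ r))
    (hosc : ∀ k : ℕ, meanOscillation n Q x₀ (r / 2 ^ k) ≤ δ) (k : ℕ) :
    ballMean n Q x₀ (r / 2 ^ k) ≤ ballMean n Q x₀ r + k * (2 ^ n * δ) := by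
  induction k with
  | zero => simp
  | succ k ih =>
    have hle : r / 2 ^ (k + 1) ≤ r / 2 ^ k := by gcongr <;> norm_num
    have hratio : r / 2 ^ k / (r / 2 ^ (k + 1)) = 2 := by field_simp; ring
    have hstep := abs_ballMean_sub_ballMean_le (by positivity) hle
      (hQ.mono_set (ball_subset_ball (div_le_self hr.le (one_le_pow₀ one_le_two))))
    rw [hratio] at hstep
    have := mul_le_mul_of_nonneg_left (hosc k) (by positivity : (0 : ℝ) ≤ 2 ^ n)
    push_cast
    linarith [(abs_le.1 hstep).2]

lemma exists_ballMean_div_two_pow_le_mul_succ (hQ0 : ∀ x, 0 ≤ Q x)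
    (hFMO : limsup (fun ε => ENNReal.ofReal (meanOscillation n Q x₀ ε)) (𝓝[>] 0) < ⊤) :
    ∃ t > 0, ∀ r ∈ Ioo 0 t, IntegrableOn Q (ball x₀ r) →
      ∃ M, 0 < M ∧ ∀ k : ℕ, ballMean n Q x₀ (r / 2 ^ k) ≤ M * (k + 1) := by
  obtain ⟨δ, hδ0, hδ⟩ := exists_nonneg_eventually_le_of_limsup_ofReal_lt_top hFMO
  obtain ⟨t, ht, hosc⟩ := mem_nhdsGT_iff_exists_Ioo_subset.1 hδ
  refine ⟨t, ht, fun r ⟨hr, hrt⟩ hQ => ?_⟩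
  have hmean := ballMean_nonneg (x₀ := x₀) hQ0 hr.le
  refine ⟨ballMean n Q x₀ r + 2 ^ n * δ + 1, by positivity, fun k => ?_⟩
  refine (ballMean_div_two_pow_le hr hQ (fun k => hosc ⟨by positivity,
    (div_le_self hr.le (one_le_pow₀ one_le_two)).trans_lt hrt⟩) k).trans ?_
  have : (0 : ℝ) ≤ k := k.cast_nonneg
  have : 0 ≤ 2 ^ n * δ := by positivity
  nlinarith

lemma setLIntegral_dyadicShell_le (hn : 1 ≤ n) (hr : 0 < r) (hr2 : r ≤ 1 / 2)
    (hQ : IntegrableOn Q (ball x₀ r)) (hQ0 : ∀ x, 0 ≤ Q x) (k : ℕ) :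
    ∫⁻ x in dyadicShell x₀ r k, ENNReal.ofReal (Q x / (dist x x₀ * log (1 / dist x x₀)) ^ n) ≤
      ENNReal.ofReal
        (unitBallVol n * 2 ^ n * ballMean n Q x₀ (r / 2 ^ k) / ((k + 1) * log 2) ^ n) := by
  have : Nonempty (Fin n) := ⟨⟨0, hn⟩⟩
  have hst : dyadicShell x₀ r k ≤ᵐ[volume] ball x₀ (r / 2 ^ k) :=
    ae_le_set.2 <| measure_mono_null
      (fun x hx => mem_sphere.2 (le_antisymm hx.1.2 (not_lt.1 hx.2)))
      (Measure.addHaar_sphere _ _ _)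
  refine (setLIntegral_ofReal_div_pow_le n (by positivity) (measurableSet_dyadicShell k) hst
    (hQ.mono_set (ball_subset_ball (div_le_self hr.le (one_le_pow₀ one_le_two)))) hQ0
    fun x hx => le_dist_mul_log_inv_of_mem_dyadicShell hr hr2 hx).trans_eq ?_
  have hsplit : r / 2 ^ k = 2 * (r / 2 ^ (k + 1)) := by rw [pow_succ]; field_simp
  have : 0 < r / 2 ^ (k + 1) := by positivity
  rw [integral_ball_eq_mul_ballMean (by positivity), hsplit, mul_pow, mul_pow]
  field_simp

lemma lintegral_annulus_le_mul_one_add_log (hn : 2 ≤ n) (hr : 0 < r) (hr2 : r ≤ 1 / 2)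
    (hQ : IntegrableOn Q (ball x₀ r)) (hQ0 : ∀ x, 0 ≤ Q x) {M : ℝ} (hM0 : 0 ≤ M)
    (hM : ∀ k : ℕ, ballMean n Q x₀ (r / 2 ^ k) ≤ M * (k + 1)) {ε : ℝ} {K : ℕ} (hε : 0 < ε)
    (hK : r / ε < 2 ^ (K + 1)) :
    ∫⁻ x in {x | ε < dist x x₀ ∧ dist x x₀ < r},
        ENNReal.ofReal (Q x / (dist x x₀ * log (1 / dist x x₀)) ^ n) ≤
      ENNReal.ofReal (unitBallVol n * 2 ^ n * M / log 2 ^ n * (1 + log (K + 1))) := by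
  set C₁ := unitBallVol n * 2 ^ n * M / log 2 ^ n
  have := unitBallVol_pos n
  have hshell (k : ℕ) : ∫⁻ x in dyadicShell x₀ r k,
      ENNReal.ofReal (Q x / (dist x x₀ * log (1 / dist x x₀)) ^ n) ≤
        ENNReal.ofReal (C₁ / (k + 1)) := by
    refine (setLIntegral_dyadicShell_le (by omega) hr hr2 hQ hQ0 k).trans
      (ENNReal.ofReal_le_ofReal ?_)
    calc _ = unitBallVol n * 2 ^ n * (ballMean n Q x₀ (r / 2 ^ k) / ((k + 1) * log 2) ^ n) := by
          ring
      _ ≤ unitBallVol n * 2 ^ n * (M / log 2 ^ n / (k + 1)) :=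
          mul_le_mul_of_nonneg_left
            (div_mul_pow_le_div hn hM0 (log_pos one_lt_two) (by simp) (hM k)) (by positivity)
      _ = C₁ / (k + 1) := by ring
  calc _ ≤ ∫⁻ x in ⋃ k : Fin (K + 1), dyadicShell x₀ r k,
        ENNReal.ofReal (Q x / (dist x x₀ * log (1 / dist x x₀)) ^ n) :=
        lintegral_mono_set (annulus_subset_iUnion_dyadicShell hε hK)
    _ ≤ ∑ k : Fin (K + 1), ∫⁻ x in dyadicShell x₀ r k,
        ENNReal.ofReal (Q x / (dist x x₀ * log (1 / dist x x₀)) ^ n) :=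
        (lintegral_iUnion_le _ _).trans_eq (tsum_fintype _)
    _ ≤ ∑ k ∈ Finset.range (K + 1), ENNReal.ofReal (C₁ / (k + 1)) := by
        rw [← Fin.sum_univ_eq_sum_range]
        exact Finset.sum_le_sum fun k _ => hshell k
    _ ≤ ENNReal.ofReal (C₁ * (1 + log (K + 1))) := by
        rw [← ENNReal.ofReal_sum_of_nonneg fun k _ => by positivity]
        refine ENNReal.ofReal_le_ofReal ?_
        exact_mod_cast sum_range_div_succ_le_mul_one_add_log (by positivity) (K + 1)

theorem integral_annulus_le_mul_log_log (hn : 2 ≤ n) (hQm : Measurable Q) (hQ0 : ∀ x, 0 ≤ Q x)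
    (hr : 0 < r) (hr2 : r ≤ 1 / 2) (hQ : IntegrableOn Q (ball x₀ r)) {M : ℝ} (hM0 : 0 ≤ M)
    (hM : ∀ k : ℕ, ballMean n Q x₀ (r / 2 ^ k) ≤ M * (k + 1)) {ε : ℝ} (hε : 0 < ε)
    (hεr : ε < r) (hεe : ε ≤ exp (-exp 1)) :
    ∫ x in {x | ε < dist x x₀ ∧ dist x x₀ < r}, Q x / (dist x x₀ * log (1 / dist x x₀)) ^ n ≤
      unitBallVol n * 2 ^ n * M / log 2 ^ n * (2 + log 3) * log (log (1 / ε)) := by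
  obtain ⟨K, hK, hK'⟩ := exists_nat_pow_near ((one_le_div hε).2 hεr.le) one_lt_two
  have hC₁ : 0 ≤ unitBallVol n * 2 ^ n * M / log 2 ^ n := by
    have := unitBallVol_pos n
    positivity
  have hnonneg : 0 ≤ᵐ[volume.restrict {x | ε < dist x x₀ ∧ dist x x₀ < r}]
      fun x => Q x / (dist x x₀ * log (1 / dist x x₀)) ^ n :=
    ae_restrict_of_forall_mem measurableSet_annulus fun x hx =>
      div_mul_log_inv_pow_nonneg hQ0 (by linarith [hx.2])
  have hmeas : Measurable fun x => Q x / (dist x x₀ * log (1 / dist x x₀)) ^ n := by fun_prop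
  calc _ ≤ unitBallVol n * 2 ^ n * M / log 2 ^ n * (1 + log (K + 1)) := by
        rw [integral_eq_lintegral_of_nonneg_ae hnonneg hmeas.aestronglyMeasurable]
        exact ENNReal.toReal_le_of_le_ofReal
          (mul_nonneg hC₁ (by linarith [log_nonneg (by simp : (1 : ℝ) ≤ K + 1)]))
          (lintegral_annulus_le_mul_one_add_log hn hr hr2 hQ hQ0 hM0 hM hε hK')
    _ ≤ unitBallVol n * 2 ^ n * M / log 2 ^ n * ((2 + log 3) * log (log (1 / ε))) := by
        gcongr
        exact one_add_log_succ_le_mul_log_log hε hεe (hK.trans (by gcongr; linarith))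
    _ = _ := by ring

end BallMean

theorem stmt4_general (n : ℕ) (hn : 2 ≤ n) (D : Set (EuclideanSpace ℝ (Fin n)))
    (x₀ : EuclideanSpace ℝ (Fin n))
    (Q : EuclideanSpace ℝ (Fin n) → ℝ) (hQmeas : Measurable Q) (hQpos : ∀ x, 0 ≤ Q x)
    (r₀ : ℝ) (hr₀ : 0 < r₀) (hball : Metric.ball x₀ r₀ ⊆ D)
    (hQint : IntegrableOn Q (Metric.ball x₀ r₀))
    (hFMO : Filter.limsup (fun ε : ℝ => ENNReal.ofReal
        ((unitBallVol n * ε ^ n)⁻¹ *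
          ∫ x in Metric.ball x₀ ε, |Q x - ballMean n Q x₀ ε|))
      (nhdsWithin 0 (Set.Ioi 0)) < ⊤) :
    ∃ ε₀ : ℝ, 0 < ε₀ ∧ ε₀ < Real.exp (-1) ∧ Metric.ball x₀ ε₀ ⊆ D ∧
      ∃ C : ℝ, 0 < C ∧ ∃ ε' : ℝ, ε' ∈ Set.Ioo 0 ε₀ ∧
        (∀ ε ∈ Set.Ioo (0:ℝ) ε',
          ∫ x in {x : EuclideanSpace ℝ (Fin n) | ε < dist x x₀ ∧ dist x x₀ < ε₀},
              Q x / (dist x x₀ * Real.log (1 / dist x x₀)) ^ n ≤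
            C * Real.log (Real.log (1 / ε))) ∧
        Tendsto (fun ε : ℝ =>
            (∫ x in {x : EuclideanSpace ℝ (Fin n) | ε < dist x x₀ ∧ dist x x₀ < ε₀},
                Q x / (dist x x₀ * Real.log (1 / dist x x₀)) ^ n) /
              Real.log (Real.log (1 / ε)) ^ n)
          (nhdsWithin 0 (Set.Ioi 0)) (nhds 0) := by
  obtain ⟨t, ht, hgrowth⟩ := exists_ballMean_div_two_pow_le_mul_succ hQpos hFMO
  obtain ⟨ε₀, hε₀, hε₀t, hε₀r, hε₀e⟩ : ∃ ε₀, 0 < ε₀ ∧ ε₀ < t ∧ ε₀ < r₀ ∧ ε₀ < exp (-1) := by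
    obtain ⟨ε₀, hε₀, hlt⟩ := exists_between (lt_min (lt_min ht hr₀) (exp_pos (-1)))
    simp only [lt_min_iff] at hlt
    exact ⟨ε₀, hε₀, hlt.1.1, hlt.1.2, hlt.2⟩
  have hε₀2 : ε₀ ≤ 1 / 2 := (hε₀e.trans exp_neg_one_lt_half).le
  have hQε₀ : IntegrableOn Q (ball x₀ ε₀) := hQint.mono_set (ball_subset_ball hε₀r.le)
  obtain ⟨M, hM0, hM⟩ := hgrowth ε₀ ⟨hε₀, hε₀t⟩ hQε₀
  obtain ⟨ε', hε', hε'ε₀, hε'e⟩ : ∃ ε', 0 < ε' ∧ ε' < ε₀ ∧ ε' < exp (-exp 1) := by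
    obtain ⟨ε', hε', hlt⟩ := exists_between (lt_min hε₀ (exp_pos (-exp 1)))
    exact ⟨ε', hε', lt_min_iff.1 hlt⟩
  have hbound : ∀ ε ∈ Ioo 0 ε', ∫ x in {x | ε < dist x x₀ ∧ dist x x₀ < ε₀},
      Q x / (dist x x₀ * log (1 / dist x x₀)) ^ n ≤
        unitBallVol n * 2 ^ n * M / log 2 ^ n * (2 + log 3) * log (log (1 / ε)) :=
    fun ε hε => integral_annulus_le_mul_log_log hn hQmeas hQpos hε₀ hε₀2 hQε₀ hM0.le hM hε.1
      (hε.2.trans hε'ε₀) (hε.2.trans hε'e).le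
  refine ⟨ε₀, hε₀, hε₀e, (ball_subset_ball hε₀r.le).trans hball, _,
    by have := unitBallVol_pos n; positivity, ε', ⟨hε', hε'ε₀⟩, hbound, ?_⟩
  have hIoo : Ioo 0 ε' ∈ 𝓝[>] (0 : ℝ) := Ioo_mem_nhdsGT hε'
  refine tendsto_div_pow_nhds_zero_of_le_mul hn tendsto_log_log_one_div_nhdsGT_zero ?_
    (eventually_of_mem hIoo hbound)
  exact eventually_of_mem hIoo fun ε _ => setIntegral_nonneg measurableSet_annulus
    fun x hx => div_mul_log_inv_pow_nonneg hQpos (by linarith [hx.2])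

/-- If `Q ≥ 0` is measurable, locally integrable at `x₀` and of finite mean oscillation at
`x₀`, then for some `ε₀ ∈ (0, e⁻¹)` and `C > 0` the integral of
`Q(x)·(|x-x₀| log(1/|x-x₀|))⁻ⁿ` over the annulus `ε < |x-x₀| < ε₀` is bounded by
`C·log log(1/ε)` for all small `ε`; in particular this integral is
`o((log log (1/ε))ⁿ)` as `ε → 0⁺`. -/
theorem stmt4 (n : ℕ) (hn : 2 ≤ n) (D : Set (EuclideanSpace ℝ (Fin n)))
    (hD : IsOpen D) (hDconn : IsConnected D) (x₀ : EuclideanSpace ℝ (Fin n)) (hx₀ : x₀ ∈ D)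
    (Q : EuclideanSpace ℝ (Fin n) → ℝ) (hQmeas : Measurable Q) (hQpos : ∀ x, 0 ≤ Q x)
    (r₀ : ℝ) (hr₀ : 0 < r₀) (hball : Metric.ball x₀ r₀ ⊆ D)
    (hQint : IntegrableOn Q (Metric.ball x₀ r₀))
    (hFMO : Filter.limsup (fun ε : ℝ => ENNReal.ofReal
        ((unitBallVol n * ε ^ n)⁻¹ *
          ∫ x in Metric.ball x₀ ε, |Q x - ballMean n Q x₀ ε|))
      (nhdsWithin 0 (Set.Ioi 0)) < ⊤) :
    ∃ ε₀ : ℝ, 0 < ε₀ ∧ ε₀ < Real.exp (-1) ∧ Metric.ball x₀ ε₀ ⊆ D ∧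
      ∃ C : ℝ, 0 < C ∧ ∃ ε' : ℝ, ε' ∈ Set.Ioo 0 ε₀ ∧
        (∀ ε ∈ Set.Ioo (0:ℝ) ε',
          ∫ x in {x : EuclideanSpace ℝ (Fin n) | ε < dist x x₀ ∧ dist x x₀ < ε₀},
              Q x / (dist x x₀ * Real.log (1 / dist x x₀)) ^ n ≤
            C * Real.log (Real.log (1 / ε))) ∧
        Tendsto (fun ε : ℝ =>
            (∫ x in {x : EuclideanSpace ℝ (Fin n) | ε < dist x x₀ ∧ dist x x₀ < ε₀},
                Q x / (dist x x₀ * Real.log (1 / dist x x₀)) ^ n) /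
              Real.log (Real.log (1 / ε)) ^ n)
          (nhdsWithin 0 (Set.Ioi 0)) (nhds 0) :=
  stmt4_general n hn D x₀ Q hQmeas hQpos r₀ hr₀ hball hQint hFMO
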